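/- arXiv:2305.17057 — 2 statements merged into one kernel-verified Lean document; each statement's English description precedes it below -/
import Mathlib

section
/- Let h be a positive harmonic function on the upper half-plane H = {(x,y) : y > 0}, continuous up to the boundary, admitting a Herglotz representation h(x,y) = A y + (y/π) ∫_ℝ h(t,0)/((x-t)² + y²) dt with A ≥ 0 and ∫_ℝ h(t,0)/(t²+1) dt < ∞. If the boundary trace t ↦ h(t,0) is nondecreasing in |t|, then there exists a constant C > 0 such that h(x,y) ≤ C·(x² + y² + 1)^{1/2} for all (x,y) in H. -/
open MeasureTheory Real ProbabilityTheory NNReal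

/-!
The Poisson kernel `y / (π ((x - t) ^ 2 + y ^ 2))` is the Cauchy density with location `x` and
scale `y`, which has mass one; so subtracting the minimum `f 0` of a boundary trace `f` that is
nondecreasing in `|t|` reduces to `f ≥ 0`. Comparing `f r` with `∫ t in [r, 2r], f t / (t ^ 2 + 1)`
gives `f t ≤ 5 I r` for `|t| ≤ r`, `1 ≤ r`, where `I = ∫ f t / (t ^ 2 + 1)`. Split the Poisson
integral at `(t - x) ^ 2 = x ^ 2 + 1`: on the near part `f ≤ 10 I √(x ^ 2 + 1)`, and on the far
part the kernel is at most `5 y / (π (t ^ 2 + 1))`.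
-/

lemma cauchyPDFReal_le_of_sq_add_one_le {x₀ t : ℝ} (γ : ℝ≥0) (ht : x₀ ^ 2 + 1 ≤ (t - x₀) ^ 2) :
    cauchyPDFReal x₀ γ t ≤ π⁻¹ * γ * (5 / (t ^ 2 + 1)) := by
  rw [cauchyPDFReal_def]
  gcongr
  rw [inv_eq_one_div,
    div_le_div_iff₀ (by nlinarith [sq_nonneg x₀, sq_nonneg (γ : ℝ)]) (by positivity)]
  nlinarith [sq_nonneg (t - 2 * x₀), sq_nonneg (γ : ℝ)]

section AbsMonotone

variable {f : ℝ → ℝ}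

lemma le_five_mul_integral_mul_of_abs_monotone (hmono : ∀ s t : ℝ, |s| ≤ |t| → f s ≤ f t)
    (hint : Integrable fun t : ℝ => f t / (t ^ 2 + 1)) (hf : ∀ t, 0 ≤ f t) {s r : ℝ}
    (hr : 1 ≤ r) (hs : |s| ≤ r) :
    f s ≤ 5 * (∫ t, f t / (t ^ 2 + 1)) * r := by
  set I := ∫ t, f t / (t ^ 2 + 1)
  have hr0 : 0 < r := by linarith
  have hsr : f s ≤ f r := hmono s r (by rwa [abs_of_pos hr0])
  have hlower : f r / (4 * r ^ 2 + 1) * r ≤ ∫ t in Set.Icc r (2 * r), f t / (t ^ 2 + 1) := by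
    have hvol : volume.real (Set.Icc r (2 * r)) = r := by
      rw [Real.volume_real_Icc, two_mul, add_sub_cancel_right, max_eq_left hr0.le]
    have := setIntegral_ge_of_const_le_real (s := Set.Icc r (2 * r)) (c := f r / (4 * r ^ 2 + 1))
      measurableSet_Icc measure_Icc_lt_top.ne ?_ hint.integrableOn
    · rwa [hvol] at this
    intro t ht
    have hrt : f r ≤ f t :=
      hmono r t (by rw [abs_of_pos hr0, abs_of_pos (hr0.trans_le ht.1)]; exact ht.1)
    exact div_le_div₀ (hf t) hrt (by positivity) (by nlinarith [ht.1, ht.2])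
  have hupper : ∫ t in Set.Icc r (2 * r), f t / (t ^ 2 + 1) ≤ I :=
    setIntegral_le_integral hint (.of_forall fun t => div_nonneg (hf t) (by positivity))
  have hI : 0 ≤ I := integral_nonneg fun t => div_nonneg (hf t) (by positivity)
  have hfr : f r * r ≤ I * (4 * r ^ 2 + 1) := by
    have := hlower.trans hupper
    rwa [div_mul_eq_mul_div, div_le_iff₀ (by positivity)] at this
  nlinarith [mul_nonneg hI (show 0 ≤ r ^ 2 - 1 by nlinarith)]

lemma integral_mul_cauchyPDFReal_le_of_nonneg (hmono : ∀ s t : ℝ, |s| ≤ |t| → f s ≤ f t)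
    (hint : Integrable fun t : ℝ => f t / (t ^ 2 + 1)) (hf : ∀ t, 0 ≤ f t) (x₀ : ℝ) {γ : ℝ≥0}
    (hγ : γ ≠ 0) :
    ∫ t, f t * cauchyPDFReal x₀ γ t ≤
      10 * (∫ t, f t / (t ^ 2 + 1)) * √(x₀ ^ 2 + 1) + π⁻¹ * γ * 5 * ∫ t, f t / (t ^ 2 + 1) := by
  set I := ∫ t, f t / (t ^ 2 + 1)
  set R := √(x₀ ^ 2 + 1)
  have hI : 0 ≤ I := integral_nonneg fun t => div_nonneg (hf t) (by positivity)
  have hR : 1 ≤ R := Real.one_le_sqrt.2 (by nlinarith)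
  have hp : ∀ t, 0 ≤ cauchyPDFReal x₀ γ t := fun t => (cauchyPDF_pos x₀ hγ t).le
  have hpoint : ∀ t, f t * cauchyPDFReal x₀ γ t ≤
      10 * I * R * cauchyPDFReal x₀ γ t + π⁻¹ * γ * 5 * (f t / (t ^ 2 + 1)) := by
    intro t
    have hfar_nonneg : 0 ≤ π⁻¹ * γ * 5 * (f t / (t ^ 2 + 1)) := by
      have := hf t
      positivity
    rcases lt_or_ge ((t - x₀) ^ 2) (x₀ ^ 2 + 1) with hnear | hfar
    · have htR : |t| ≤ 2 * R := by
        linarith [Real.abs_le_sqrt hnear.le,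
          Real.abs_le_sqrt (show x₀ ^ 2 ≤ x₀ ^ 2 + 1 by linarith),
          abs_sub_abs_le_abs_sub t x₀]
      have hft : f t ≤ 5 * I * (2 * R) :=
        le_five_mul_integral_mul_of_abs_monotone hmono hint hf (by linarith) htR
      nlinarith [mul_le_mul_of_nonneg_right hft (hp t)]
    · have hnear_nonneg : 0 ≤ 10 * I * R * cauchyPDFReal x₀ γ t := by
        have := hp t
        positivity
      calc f t * cauchyPDFReal x₀ γ t ≤ f t * (π⁻¹ * γ * (5 / (t ^ 2 + 1))) :=
            mul_le_mul_of_nonneg_left (cauchyPDFReal_le_of_sq_add_one_le γ hfar) (hf t)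
        _ = π⁻¹ * γ * 5 * (f t / (t ^ 2 + 1)) := by ring
        _ ≤ _ := le_add_of_nonneg_left hnear_nonneg
  have hmajor : Integrable fun t =>
      10 * I * R * cauchyPDFReal x₀ γ t + π⁻¹ * γ * 5 * (f t / (t ^ 2 + 1)) :=
    ((integrable_cauchyPDFReal x₀).const_mul _).add (hint.const_mul _)
  calc ∫ t, f t * cauchyPDFReal x₀ γ t
      ≤ ∫ t, 10 * I * R * cauchyPDFReal x₀ γ t + π⁻¹ * γ * 5 * (f t / (t ^ 2 + 1)) :=
        integral_mono_of_nonneg (.of_forall fun t => mul_nonneg (hf t) (hp t)) hmajor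
          (.of_forall hpoint)
    _ = 10 * I * R + π⁻¹ * γ * 5 * I := by
      rw [integral_add ((integrable_cauchyPDFReal x₀).const_mul _) (hint.const_mul _),
        integral_const_mul, integral_const_mul, integral_cauchyPDFReal_eq_one x₀ hγ, mul_one]

lemma exists_integral_mul_cauchyPDFReal_le (hmono : ∀ s t : ℝ, |s| ≤ |t| → f s ≤ f t)
    (hint : Integrable fun t : ℝ => f t / (t ^ 2 + 1)) :
    ∃ C, ∀ (x₀ : ℝ) (γ : ℝ≥0), γ ≠ 0 →
      ∫ t, f t * cauchyPDFReal x₀ γ t ≤ C * √(x₀ ^ 2 + γ ^ 2 + 1) := by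
  set g := fun t => f t - f 0
  have hg : ∀ t, 0 ≤ g t := fun t => sub_nonneg.2 (hmono 0 t (by simp))
  have hgmono : ∀ s t : ℝ, |s| ≤ |t| → g s ≤ g t := fun s t hst =>
    sub_le_sub_right (hmono s t hst) _
  have hgint : Integrable fun t : ℝ => g t / (t ^ 2 + 1) :=
    (hint.sub (integrable_inv_one_add_sq.const_mul (f 0))).congr
      (.of_forall fun t => by simp only [g, Pi.sub_apply]; ring)
  set J := ∫ t, g t / (t ^ 2 + 1)
  have hJ : 0 ≤ J := integral_nonneg fun t => div_nonneg (hg t) (by positivity)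
  refine ⟨15 * J + |f 0|, fun x₀ γ hγ => ?_⟩
  set ρ := √(x₀ ^ 2 + γ ^ 2 + 1)
  have hρ : 1 ≤ ρ := Real.one_le_sqrt.2 (by nlinarith)
  have hRρ : √(x₀ ^ 2 + 1) ≤ ρ := Real.sqrt_le_sqrt (by nlinarith)
  have hγρ : π⁻¹ * γ ≤ ρ := by
    rw [inv_mul_eq_div]
    exact (div_le_self γ.coe_nonneg (by linarith [pi_gt_three])).trans
      (Real.le_sqrt_of_sq_le (by linarith [sq_nonneg x₀]))
  by_cases hfp : Integrable fun t => f t * cauchyPDFReal x₀ γ t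
  · have hsplit : ∫ t, f t * cauchyPDFReal x₀ γ t = (∫ t, g t * cauchyPDFReal x₀ γ t) + f 0 := by
      have := integral_sub hfp ((integrable_cauchyPDFReal x₀ (γ := γ)).const_mul (f 0))
      rw [integral_const_mul, integral_cauchyPDFReal_eq_one x₀ hγ] at this
      simp only [g, sub_mul, this]
      ring
    have hgbound : ∫ t, g t * cauchyPDFReal x₀ γ t ≤
        10 * J * √(x₀ ^ 2 + 1) + π⁻¹ * γ * 5 * J :=
      integral_mul_cauchyPDFReal_le_of_nonneg hgmono hgint hg x₀ hγ
    calc ∫ t, f t * cauchyPDFReal x₀ γ t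
        ≤ 10 * J * √(x₀ ^ 2 + 1) + π⁻¹ * γ * 5 * J + |f 0| := by
          linarith [le_abs_self (f 0)]
      _ ≤ 10 * J * ρ + ρ * 5 * J + |f 0| * ρ := by
          gcongr
          exact le_mul_of_one_le_right (abs_nonneg _) hρ
      _ = (15 * J + |f 0|) * ρ := by ring
  · rw [integral_undef hfp]
    positivity

end AbsMonotone

lemma div_pi_mul_integral_eq_integral_mul_cauchyPDFReal (f : ℝ → ℝ) (x : ℝ) {y : ℝ} (hy : 0 ≤ y) :
    y / π * ∫ t, f t / ((x - t) ^ 2 + y ^ 2) = ∫ t, f t * cauchyPDFReal x y.toNNReal t := by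
  rw [← integral_const_mul]
  congr 1 with t
  rw [cauchyPDFReal_def, Real.coe_toNNReal y hy]
  ring

theorem herglotz_monotone_boundary_linear_growth_general
    (h : ℝ → ℝ → ℝ) (A : ℝ)
    (hA : 0 ≤ A)
    (hint : Integrable (fun t : ℝ => h t 0 / (t ^ 2 + 1)))
    (hrep : ∀ x y : ℝ, 0 < y →
      h x y = A * y + (y / π) * ∫ t : ℝ, h t 0 / ((x - t) ^ 2 + y ^ 2))
    (hmono : ∀ s t : ℝ, |s| ≤ |t| → h s 0 ≤ h t 0) :
    ∃ C : ℝ, 0 < C ∧ ∀ x y : ℝ, 0 < y →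
      h x y ≤ C * Real.sqrt (x ^ 2 + y ^ 2 + 1) := by
  obtain ⟨C, hC⟩ := exists_integral_mul_cauchyPDFReal_le hmono hint
  refine ⟨A + |C| + 1, by positivity, fun x y hy => ?_⟩
  have hyρ : y ≤ √(x ^ 2 + y ^ 2 + 1) := Real.le_sqrt_of_sq_le (by nlinarith)
  have hpoisson := hC x y.toNNReal (by simpa using hy)
  rw [Real.coe_toNNReal y hy.le] at hpoisson
  rw [hrep x y hy, div_pi_mul_integral_eq_integral_mul_cauchyPDFReal _ x hy.le]
  nlinarith [mul_le_mul_of_nonneg_left hyρ hA, le_abs_self C, Real.sqrt_nonneg (x ^ 2 + y ^ 2 + 1)]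

/-- A positive harmonic function on the upper half-plane, continuous up to the
boundary, with a Herglotz representation whose boundary trace is nondecreasing in `|t|`,
grows at most linearly: `h(x,y) ≤ C·(x² + y² + 1)^{1/2}`. -/
theorem herglotz_monotone_boundary_linear_growth
    (h : ℝ → ℝ → ℝ) (A : ℝ)
    (hpos : ∀ x y : ℝ, 0 < y → 0 < h x y)
    (hharm : ∀ x y : ℝ, 0 < y →
      deriv (fun s => deriv (fun u => h u y) s) x
        + deriv (fun s => deriv (fun v => h x v) s) y = 0)
    (hcont : ContinuousOn (fun p : ℝ × ℝ => h p.1 p.2) {p : ℝ × ℝ | 0 ≤ p.2})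
    (hA : 0 ≤ A)
    (hint : Integrable (fun t : ℝ => h t 0 / (t ^ 2 + 1)))
    (hrep : ∀ x y : ℝ, 0 < y →
      h x y = A * y + (y / π) * ∫ t : ℝ, h t 0 / ((x - t) ^ 2 + y ^ 2))
    (hmono : ∀ s t : ℝ, |s| ≤ |t| → h s 0 ≤ h t 0) :
    ∃ C : ℝ, 0 < C ∧ ∀ x y : ℝ, 0 < y →
      h x y ≤ C * Real.sqrt (x ^ 2 + y ^ 2 + 1) :=
  herglotz_monotone_boundary_linear_growth_general h A hA hint hrep hmono
end

section
/- There exists a constant C > 0 such that for all x ∈ ℝ and y > 0, y · ∫_ℝ (1 + √|t|)/((x-t)² + y²) dt ≤ C·(1 + √|x| + √y). -/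
/-!
Subadditivity of the square root gives `√|t| ≤ √|x| + √|t - x|`, which after the translation
`t ↦ t + x` splits the integral into two Poisson-type integrals. Scaling `u = y s` evaluates them:
`∫ du / (u² + y²) = π / y` and `∫ √|u| / (u² + y²) du = y^(-1/2) ∫ √|s| / (s² + 1) ds`, the last
integral being finite because its integrand is `O(|s|^(-3/2))`. So `C = π + ∫ √|s| / (s² + 1) ds`.
-/

open MeasureTheory Real

theorem Real.sqrt_add_le_sqrt_add_sqrt {a b : ℝ} (ha : 0 ≤ a) (hb : 0 ≤ b) :
    √(a + b) ≤ √a + √b := by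
  rw [sqrt_le_left (by positivity), add_sq, sq_sqrt ha, sq_sqrt hb]
  nlinarith [sqrt_nonneg a, sqrt_nonneg b]

theorem sqrt_abs_le_sqrt_abs_add_sqrt_abs_sub (t x : ℝ) : √|t| ≤ √|x| + √|t - x| :=
  calc √|t| ≤ √(|x| + |t - x|) := sqrt_le_sqrt (by simpa using abs_add_le x (t - x))
    _ ≤ √|x| + √|t - x| := sqrt_add_le_sqrt_add_sqrt (abs_nonneg _) (abs_nonneg _)

theorem sqrt_abs_le_one_add_sq_rpow (s : ℝ) : √|s| ≤ (1 + s ^ 2) ^ (1 / 4 : ℝ) := by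
  have hs : |s| ≤ √(1 + s ^ 2) := by
    rw [← sqrt_sq_eq_abs]; exact sqrt_le_sqrt (by linarith)
  calc √|s| ≤ √(√(1 + s ^ 2)) := sqrt_le_sqrt hs
    _ = (1 + s ^ 2) ^ (1 / 4 : ℝ) := by
      rw [sqrt_eq_rpow, sqrt_eq_rpow, ← rpow_mul (by positivity)]; norm_num

theorem integrable_sqrt_abs_div_sq_add_one :
    Integrable fun s : ℝ => √|s| / (s ^ 2 + 1) := by
  refine (integrable_rpow_neg_one_add_norm_sq (E := ℝ) (r := 3 / 2) (by norm_num)).mono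
    ((continuous_abs.sqrt.div (by fun_prop) fun s => by positivity).aestronglyMeasurable)
    (Filter.Eventually.of_forall fun s => ?_)
  have h1 : (0 : ℝ) < 1 + s ^ 2 := by positivity
  rw [norm_of_nonneg (by positivity), norm_of_nonneg (by positivity), norm_eq_abs, sq_abs,
    add_comm (s ^ 2)]
  calc √|s| / (1 + s ^ 2) ≤ (1 + s ^ 2) ^ (1 / 4 : ℝ) / (1 + s ^ 2) := by
        gcongr; exact sqrt_abs_le_one_add_sq_rpow s
    _ = (1 + s ^ 2) ^ (-(3 / 2 : ℝ) / 2) := by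
        rw [div_eq_mul_inv, ← rpow_neg_one, ← rpow_add h1]; norm_num

section Scaling

variable {y : ℝ}

theorem one_div_sq_add_sq_eq (hy : y ≠ 0) (u : ℝ) :
    1 / (u ^ 2 + y ^ 2) = (y ^ 2)⁻¹ * (1 + (u / y) ^ 2)⁻¹ := by
  field_simp; ring

theorem sqrt_abs_div_sq_add_sq_eq (hy : 0 < y) (u : ℝ) :
    √|u| / (u ^ 2 + y ^ 2) = (y * √y)⁻¹ * (√|u / y| / ((u / y) ^ 2 + 1)) := by
  have hsy : 0 < √y := sqrt_pos.mpr hy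
  rw [abs_div, abs_of_pos hy, sqrt_div (abs_nonneg u)]
  field_simp
  rw [sq_sqrt hy.le]

theorem integrable_one_div_sq_add_sq (hy : y ≠ 0) :
    Integrable fun u : ℝ => 1 / (u ^ 2 + y ^ 2) := by
  simpa only [one_div_sq_add_sq_eq hy] using
    (integrable_inv_one_add_sq.comp_div hy).const_mul (y ^ 2)⁻¹

theorem integral_one_div_sq_add_sq (hy : 0 < y) : ∫ u : ℝ, 1 / (u ^ 2 + y ^ 2) = π / y := by
  simp only [one_div_sq_add_sq_eq hy.ne']
  rw [integral_const_mul, Measure.integral_comp_div (fun s : ℝ => (1 + s ^ 2)⁻¹),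
    integral_univ_inv_one_add_sq, smul_eq_mul, abs_of_pos hy]
  field_simp

theorem integrable_sqrt_abs_div_sq_add_sq (hy : 0 < y) :
    Integrable fun u : ℝ => √|u| / (u ^ 2 + y ^ 2) := by
  simpa only [sqrt_abs_div_sq_add_sq_eq hy] using
    (integrable_sqrt_abs_div_sq_add_one.comp_div hy.ne').const_mul (y * √y)⁻¹

theorem integral_sqrt_abs_div_sq_add_sq (hy : 0 < y) :
    ∫ u : ℝ, √|u| / (u ^ 2 + y ^ 2) = (∫ s : ℝ, √|s| / (s ^ 2 + 1)) / √y := by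
  have hsy : 0 < √y := sqrt_pos.mpr hy
  simp only [sqrt_abs_div_sq_add_sq_eq hy]
  rw [integral_const_mul, Measure.integral_comp_div (fun s : ℝ => √|s| / (s ^ 2 + 1)),
    smul_eq_mul, abs_of_pos hy]
  field_simp

end Scaling

theorem one_add_sqrt_abs_div_le (x y t : ℝ) :
    (1 + √|t|) / ((x - t) ^ 2 + y ^ 2) ≤
      (1 + √|x|) * (1 / ((t - x) ^ 2 + y ^ 2)) + √|t - x| / ((t - x) ^ 2 + y ^ 2) := by
  rw [mul_one_div, ← add_div, ← neg_sub t x, neg_sq]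
  exact div_le_div_of_nonneg_right (by linarith [sqrt_abs_le_sqrt_abs_add_sqrt_abs_sub t x])
    (by positivity)

theorem integral_one_add_sqrt_abs_div_le (x : ℝ) {y : ℝ} (hy : 0 < y) :
    ∫ t : ℝ, (1 + √|t|) / ((x - t) ^ 2 + y ^ 2) ≤
      (1 + √|x|) * (π / y) + (∫ s : ℝ, √|s| / (s ^ 2 + 1)) / √y := by
  have h₁ := (integrable_one_div_sq_add_sq hy.ne').comp_sub_right x
  have h₂ := (integrable_sqrt_abs_div_sq_add_sq hy).comp_sub_right x
  calc ∫ t : ℝ, (1 + √|t|) / ((x - t) ^ 2 + y ^ 2)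
      ≤ ∫ t : ℝ, (1 + √|x|) * (1 / ((t - x) ^ 2 + y ^ 2)) +
          √|t - x| / ((t - x) ^ 2 + y ^ 2) :=
        integral_mono_of_nonneg (.of_forall fun t => by positivity) ((h₁.const_mul _).add h₂)
          (.of_forall (one_add_sqrt_abs_div_le x y))
    _ = (1 + √|x|) * (π / y) + (∫ s : ℝ, √|s| / (s ^ 2 + 1)) / √y := by
        rw [integral_add (h₁.const_mul _) h₂, integral_const_mul,
          integral_sub_right_eq_self (fun u => 1 / (u ^ 2 + y ^ 2)),
          integral_sub_right_eq_self (fun u => √|u| / (u ^ 2 + y ^ 2)),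
          integral_one_div_sq_add_sq hy, integral_sqrt_abs_div_sq_add_sq hy]

/-- there is `C > 0` with
`y · ∫_ℝ (1 + √|t|)/((x-t)² + y²) dt ≤ C·(1 + √|x| + √y)` for all `x ∈ ℝ`, `y > 0`. -/
theorem halfplane_sqrt_boundary_integral_bound :
    ∃ C : ℝ, 0 < C ∧ ∀ x y : ℝ, 0 < y →
      y * ∫ t : ℝ, (1 + Real.sqrt |t|) / ((x - t) ^ 2 + y ^ 2)
        ≤ C * (1 + Real.sqrt |x| + Real.sqrt y) := by
  set I := ∫ s : ℝ, √|s| / (s ^ 2 + 1)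
  have hI : 0 ≤ I := integral_nonneg fun s => by positivity
  refine ⟨π + I, by positivity, fun x y hy => ?_⟩
  have hsy : √y * √y = y := mul_self_sqrt hy.le
  calc y * ∫ t : ℝ, (1 + √|t|) / ((x - t) ^ 2 + y ^ 2)
      ≤ y * ((1 + √|x|) * (π / y) + I / √y) :=
        mul_le_mul_of_nonneg_left (integral_one_add_sqrt_abs_div_le x hy) hy.le
    _ = π * (1 + √|x|) + I * √y := by field_simp; linear_combination -I * hsy
    _ ≤ (π + I) * (1 + √|x| + √y) := by
        nlinarith [mul_nonneg pi_pos.le (sqrt_nonneg y), mul_nonneg hI (sqrt_nonneg |x|)]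
end
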